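/- For A symmetric positive definite with A = D + L + Lᵀ, the decrease in f(x) = ½ xᵀAx - xᵀb over one SOR step with parameter ω ∈ (0,2) equals f(x) - f(x') = ((2-ω)/(2ω)) (x' - x)ᵀ D (x' - x), where x' = G_ω x + c_ω. In particular f(x') < f(x) whenever x' ≠ x. -/

import Mathlib

/-!
With `d = x' - x`, the SOR step is the correction equation `(D + ωL) d = ω (b - A x)`.
Pairing it with `d` gives `ω dᵀ(b - Ax) = dᵀDd + ω dᵀLd`, while symmetry of `A` gives
`f x - f x' = dᵀ(b - Ax) - ½ dᵀAd` with `dᵀAd = dᵀDd + 2 dᵀLd`. The `L`-terms cancel, leaving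
`((2 - ω)/(2ω)) dᵀDd`, which is positive for `d ≠ 0` because `D` has a positive diagonal.
-/

open Matrix

section

variable {ι R : Type*} [Fintype ι] [CommRing R]

theorem dotProduct_transpose_mulVec_self (L : Matrix ι ι R) (v : ι → R) :
    v ⬝ᵥ Lᵀ *ᵥ v = v ⬝ᵥ L *ᵥ v := by
  rw [dotProduct_mulVec, vecMul_transpose, dotProduct_comm]

theorem Matrix.IsSymm.add_dotProduct_mulVec_add {A : Matrix ι ι R} (hA : A.IsSymm)
    (x d : ι → R) :
    (x + d) ⬝ᵥ A *ᵥ (x + d) = x ⬝ᵥ A *ᵥ x + 2 * (d ⬝ᵥ A *ᵥ x) + d ⬝ᵥ A *ᵥ d := by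
  have hswap : x ⬝ᵥ A *ᵥ d = d ⬝ᵥ A *ᵥ x := by
    rw [dotProduct_mulVec, ← mulVec_transpose, hA.eq, dotProduct_comm]
  simp only [mulVec_add, dotProduct_add, add_dotProduct, hswap]
  ring

theorem sor_energy_identity {A D L : Matrix ι ι R} (hA : A = D + L + Lᵀ) {ω : R}
    {d r : ι → R} (hd : (D + ω • L) *ᵥ d = ω • r) :
    ω * (2 * (d ⬝ᵥ r) - d ⬝ᵥ A *ᵥ d) = (2 - ω) * (d ⬝ᵥ D *ᵥ d) := by
  have hdr : ω * (d ⬝ᵥ r) = d ⬝ᵥ D *ᵥ d + ω * (d ⬝ᵥ L *ᵥ d) := by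
    rw [← smul_eq_mul, ← dotProduct_smul, ← hd, add_mulVec, smul_mulVec, dotProduct_add,
      dotProduct_smul, smul_eq_mul]
  have hdAd : d ⬝ᵥ A *ᵥ d = d ⬝ᵥ D *ᵥ d + 2 * (d ⬝ᵥ L *ᵥ d) := by
    rw [hA, add_mulVec, add_mulVec, dotProduct_add, dotProduct_add,
      dotProduct_transpose_mulVec_self]
    ring
  rw [hdAd]
  linear_combination 2 * hdr

variable [DecidableEq ι]

theorem isUnit_det_diagonal_add_smul [LinearOrder ι] {a : ι → R} {L : Matrix ι ι R}
    (ha : ∀ i, IsUnit (a i)) (hL : ∀ i j, i ≤ j → L i j = 0) (c : R) :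
    IsUnit (diagonal a + c • L).det := by
  have hlower : (diagonal a + c • L).IsLowerTriangular := fun i j hij => by
    have hij : i < j := hij
    simp [diagonal_apply_ne _ hij.ne, hL i j hij.le]
  rw [det_of_isLowerTriangular _ hlower, IsUnit.prod_univ_iff]
  intro i
  simpa [hL i i le_rfl] using ha i

theorem sor_step_correction {A D L : Matrix ι ι R} (hA : A = D + L + Lᵀ) {ω : R}
    (hunit : IsUnit (D + ω • L).det) (b x : ι → R) {x' : ι → R}
    (hx' : x' = (D + ω • L)⁻¹ *ᵥ (((1 - ω) • D - ω • Lᵀ) *ᵥ x + ω • b)) :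
    (D + ω • L) *ᵥ (x' - x) = ω • (b - A *ᵥ x) := by
  rw [mulVec_sub, hx', mulVec_mulVec, mul_nonsing_inv _ hunit, one_mulVec, hA]
  simp only [add_mulVec, sub_mulVec, smul_mulVec, sub_smul, one_smul, smul_sub, smul_add]
  abel

end

theorem sor_step_exact_decrease_general {n : ℕ}
    (A D L : Matrix (Fin n) (Fin n) ℝ)
    (hD : D = Matrix.diagonal (fun i => A i i))
    (hdiag : ∀ i, 0 < A i i)
    (hL : ∀ i j : Fin n, i ≤ j → L i j = 0)
    (hA : A = D + L + Lᵀ)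
    (b : Fin n → ℝ) (ω : ℝ) (hω : ω ∈ Set.Ioo (0 : ℝ) 2)
    (f : (Fin n → ℝ) → ℝ)
    (hfdef : f = fun x => (1 / 2) * (x ⬝ᵥ A.mulVec x) - x ⬝ᵥ b)
    (x x' : Fin n → ℝ)
    (hx' : x' = (D + ω • L)⁻¹.mulVec ((((1 - ω) • D - ω • Lᵀ).mulVec x) + ω • b)) :
    f x - f x' = ((2 - ω) / (2 * ω)) * ((x' - x) ⬝ᵥ D.mulVec (x' - x)) ∧
      (x' ≠ x → f x' < f x) := by
  obtain ⟨hω0, hω2⟩ := hω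
  have hDpos : D.PosDef := hD ▸ posDef_diagonal_iff.2 hdiag
  have hAsymm : A.IsSymm := by
    rw [hA, IsSymm, transpose_add, transpose_add, transpose_transpose,
      (hD ▸ isSymm_diagonal _ : D.IsSymm).eq]
    abel
  have hunit : IsUnit (D + ω • L).det :=
    hD ▸ isUnit_det_diagonal_add_smul (fun i => (hdiag i).ne'.isUnit) hL ω
  have henergy := sor_energy_identity hA (sor_step_correction hA hunit b x hx')
  have hexpand := hAsymm.add_dotProduct_mulVec_add x (x' - x)
  rw [add_sub_cancel] at hexpand
  have hdecrease : f x - f x' = (2 - ω) / (2 * ω) * ((x' - x) ⬝ᵥ D *ᵥ (x' - x)) := by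
    rw [div_mul_eq_mul_div, ← henergy, hfdef]
    field_simp
    simp only [dotProduct_sub, sub_dotProduct] at hexpand ⊢
    linear_combination -hexpand
  refine ⟨hdecrease, fun hne => ?_⟩
  have hpos : 0 < (x' - x) ⬝ᵥ D *ᵥ (x' - x) := hDpos.dotProduct_mulVec_pos (sub_ne_zero.2 hne)
  have hcoeff : 0 < (2 - ω) / (2 * ω) := by apply div_pos <;> linarith
  linarith [mul_pos hcoeff hpos]

/-- Exact decrease of `f` over one SOR step:
`f(x) - f(x') = ((2-ω)/(2ω)) (x'-x)ᵀ D (x'-x)`; in particular `f(x') < f(x)` when `x' ≠ x`. -/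
theorem sor_step_exact_decrease {n : ℕ}
    (A D L : Matrix (Fin n) (Fin n) ℝ)
    (hApd : A.PosDef)
    (hD : D = Matrix.diagonal (fun i => A i i))
    (hdiag : ∀ i, 0 < A i i)
    (hL : ∀ i j : Fin n, i ≤ j → L i j = 0)
    (hA : A = D + L + Lᵀ)
    (b : Fin n → ℝ) (ω : ℝ) (hω : ω ∈ Set.Ioo (0 : ℝ) 2)
    (f : (Fin n → ℝ) → ℝ)
    (hfdef : f = fun x => (1 / 2) * (x ⬝ᵥ A.mulVec x) - x ⬝ᵥ b)
    (x x' : Fin n → ℝ)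
    (hx' : x' = (D + ω • L)⁻¹.mulVec ((((1 - ω) • D - ω • Lᵀ).mulVec x) + ω • b)) :
    f x - f x' = ((2 - ω) / (2 * ω)) * ((x' - x) ⬝ᵥ D.mulVec (x' - x)) ∧
      (x' ≠ x → f x' < f x) :=
  sor_step_exact_decrease_general A D L hD hdiag hL hA b ω hω f hfdef x x' hx'
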